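/- arXiv:2101.00312 — 2 statements merged into one kernel-verified Lean document; each statement's English description precedes it below -/
import Mathlib

section
/- Let T and S be bounded linear operators on H admitting reduced A-adjoints T^♯ and S^♯. Then ‖T + S‖_A² ≤ ‖T^♯T + S^♯S‖_A + 2ω_A(S^♯T). -/
/-!
For `‖x‖_A = 1` one expands
`‖(T + S) x‖_A ^ 2 = ⟨(T♯T + S♯S) x, x⟩_A + 2 Re ⟨S♯T x, x⟩_A`
and bounds each term by the corresponding supremum. The real work is that these suprema are
finite (an unbounded `sSup` is `0` in `ℝ`). It rests on `|⟨R x, x⟩_A| ≤ ‖R‖ ‖x‖_A ^ 2` for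
`A`-selfadjoint `R`: Cauchy-Schwarz for `⟨·,·⟩_A` gives
`|⟨R^m x, x⟩_A| ^ 2 ≤ ⟨R^(2m) x, x⟩_A ‖x‖_A ^ 2`, and iterating along `m = 2 ^ n` against the
crude bound `‖A‖ ‖R‖ ^ 2 ^ n ‖x‖ ^ 2` leaves only the factor `‖R‖` in the limit.
-/

open ContinuousLinearMap

variable {H : Type*} [NormedAddCommGroup H] [InnerProductSpace ℂ H] [CompleteSpace H]

/-- The seminorm on `H` induced by a positive operator `A`: `‖x‖_A = √⟨Ax,x⟩`. -/
noncomputable def vnA (A : H →L[ℂ] H) (x : H) : ℝ :=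
  Real.sqrt (RCLike.re (inner ℂ (A x) x : ℂ))

/-- The `A`-seminorm of an operator: `‖X‖_A = sup {‖Xx‖_A : ‖x‖_A = 1}`. -/
noncomputable def opnA (A : H →L[ℂ] H) (X : H →L[ℂ] H) : ℝ :=
  sSup ((fun x => vnA A (X x)) '' {x : H | vnA A x = 1})

/-- The `A`-numerical radius: `ω_A(X) = sup {|⟨Xx,x⟩_A| : ‖x‖_A = 1}`. -/
noncomputable def wA (A : H →L[ℂ] H) (X : H →L[ℂ] H) : ℝ :=
  sSup ((fun x => ‖(inner ℂ (A (X x)) x : ℂ)‖) '' {x : H | vnA A x = 1})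

/-- `S` is the reduced `A`-adjoint of `T`: `A ∘ S = T* ∘ A` and
`range S ⊆ closure (range A)`. -/
def IsReducedAdjA (A T S : H →L[ℂ] H) : Prop :=
  A ∘L S = (ContinuousLinearMap.adjoint T) ∘L A ∧
    Set.range S ⊆ closure (Set.range (A : H → H))

/-- `X` is `A`-selfadjoint: `A ∘ X = X* ∘ A`. -/
def IsSelfAdjA (A X : H →L[ℂ] H) : Prop :=
  A ∘L X = (ContinuousLinearMap.adjoint X) ∘L A

/-- `Re_A(T) = (T + T♯)/2`. -/
noncomputable def ReA (T Ts : H →L[ℂ] H) : H →L[ℂ] H := (2 : ℂ)⁻¹ • (T + Ts)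

/-- `Im_A(T) = (T - T♯)/(2i)`. -/
noncomputable def ImA (T Ts : H →L[ℂ] H) : H →L[ℂ] H := (2 * Complex.I)⁻¹ • (T - Ts)

open Filter Topology
open scoped InnerProductSpace
open RCLike (re)

theorem le_of_forall_pow_two_pow_le_mul {a b C : ℝ} (hb : 0 ≤ b)
    (h : ∀ n : ℕ, a ^ 2 ^ n ≤ C * b ^ 2 ^ n) : a ≤ b := by
  by_contra! hba
  have ha : 0 < a := hb.trans_lt hba
  have hlim : Tendsto (fun n : ℕ => C * (b / a) ^ 2 ^ n) atTop (𝓝 0) := by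
    have hq := tendsto_pow_atTop_nhds_zero_of_lt_one (div_nonneg hb ha.le) ((div_lt_one ha).2 hba)
    simpa using (hq.comp (tendsto_pow_atTop_atTop_of_one_lt (α := ℕ) one_lt_two)).const_mul C
  obtain ⟨n, hn⟩ := (hlim.eventually (gt_mem_nhds one_pos)).exists
  rw [div_pow, mul_div_assoc', div_lt_one (pow_pos ha _)] at hn
  exact (h n).not_gt hn

theorem le_mul_of_sq_le_mul_succ {t : ℕ → ℝ} {r ρ K : ℝ} (hr : 0 ≤ r) (hρ : 0 ≤ ρ)
    (h0 : 0 ≤ t 0) (hsq : ∀ n, t n ^ 2 ≤ t (n + 1) * r) (hK : ∀ n, t n ≤ K * ρ ^ 2 ^ n) :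
    t 0 ≤ ρ * r := by
  rcases hr.eq_or_lt with rfl | hr
  · nlinarith [hsq 0]
  have hpow : ∀ n, (t 0 / r) ^ 2 ^ n ≤ t n / r := by
    intro n
    induction n with
    | zero => simp
    | succ n ih =>
      calc (t 0 / r) ^ 2 ^ (n + 1) = ((t 0 / r) ^ 2 ^ n) ^ 2 := by rw [pow_succ, pow_mul]
        _ ≤ (t n / r) ^ 2 := pow_le_pow_left₀ (by positivity) ih 2
        _ ≤ t (n + 1) / r := by
          rw [div_pow, sq r, ← div_div, div_le_div_iff_of_pos_right hr, div_le_iff₀ hr]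
          exact hsq n
  rw [← div_le_iff₀ hr]
  refine le_of_forall_pow_two_pow_le_mul hρ (C := K / r) fun n => (hpow n).trans ?_
  rw [div_mul_eq_mul_div]
  exact div_le_div_of_nonneg_right (hK n) hr.le

section Operators

variable {𝕜 E : Type*} [RCLike 𝕜] [NormedAddCommGroup E] [InnerProductSpace 𝕜 E]

theorem ContinuousLinearMap.IsPositive.norm_inner_sq_le {A : E →L[𝕜] E} (hA : A.IsPositive)
    (x y : E) : ‖⟪A x, y⟫_𝕜‖ ^ 2 ≤ re ⟪A x, x⟫_𝕜 * re ⟪A y, y⟫_𝕜 := by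
  let _ : PreInnerProductSpace.Core 𝕜 E :=
    { inner := fun u v => ⟪A u, v⟫_𝕜
      conj_inner_symm := fun u v => by
        rw [inner_conj_symm, hA.inner_left_eq_inner_right]
      re_inner_nonneg := hA.re_inner_nonneg_left
      add_left := fun u v w => by rw [map_add, inner_add_left]
      smul_left := fun u v c => by rw [map_smul, inner_smul_left] }
  have hsymm : ‖⟪A y, x⟫_𝕜‖ = ‖⟪A x, y⟫_𝕜‖ := by
    rw [hA.inner_left_eq_inner_right, ← inner_conj_symm, RCLike.norm_conj]
  rw [sq]
  nth_rw 2 [← hsymm]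
  exact InnerProductSpace.Core.inner_mul_inner_self_le (𝕜 := 𝕜) x y

variable [CompleteSpace E]

def IsAdjA (A T Ts : E →L[𝕜] E) : Prop :=
  A ∘L Ts = adjoint T ∘L A

namespace IsAdjA

variable {A T Ts S Ss R : E →L[𝕜] E}

theorem inner_apply (h : IsAdjA A T Ts) (x y : E) : ⟪A (Ts x), y⟫_𝕜 = ⟪A x, T y⟫_𝕜 := by
  rw [← comp_apply, h, comp_apply, adjoint_inner_left]

theorem symm (hA : IsSelfAdjoint A) (h : IsAdjA A T Ts) : IsAdjA A Ts T := by
  have h' := congrArg adjoint h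
  rw [adjoint_comp, adjoint_comp, adjoint_adjoint, hA.adjoint_eq] at h'
  exact h'.symm

theorem comp (hT : IsAdjA A T Ts) (hS : IsAdjA A S Ss) : IsAdjA A (S ∘L T) (Ts ∘L Ss) := by
  rw [IsAdjA, adjoint_comp, ← comp_assoc, hT, comp_assoc, hS, comp_assoc]

theorem add (hT : IsAdjA A T Ts) (hS : IsAdjA A S Ss) : IsAdjA A (T + S) (Ts + Ss) := by
  rw [IsAdjA, comp_add, map_add, add_comp, hT, hS]

theorem comp_self (hA : IsSelfAdjoint A) (h : IsAdjA A T Ts) : IsAdjA A (Ts ∘L T) (Ts ∘L T) :=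
  h.comp (h.symm hA)

theorem pow (h : IsAdjA A R R) (n : ℕ) : IsAdjA A (R ^ n) (R ^ n) := by
  induction n with
  | zero => rw [IsAdjA, pow_zero, adjoint_one]; rfl
  | succ n ih =>
    have h' := h.comp ih
    rwa [← mul_def, ← mul_def, ← pow_succ, ← pow_succ'] at h'

theorem norm_inner_le (hA : A.IsPositive) (hR : IsAdjA A R R) (x : E) :
    ‖⟪A (R x), x⟫_𝕜‖ ≤ ‖R‖ * re ⟪A x, x⟫_𝕜 := by
  set t : ℕ → ℝ := fun n => ‖⟪A ((R ^ 2 ^ n) x), x⟫_𝕜‖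
  have hsq : ∀ n, t n ^ 2 ≤ t (n + 1) * re ⟪A x, x⟫_𝕜 := fun n => calc
    t n ^ 2 ≤ re ⟪A ((R ^ 2 ^ n) x), (R ^ 2 ^ n) x⟫_𝕜 * re ⟪A x, x⟫_𝕜 :=
      hA.norm_inner_sq_le _ _
    _ = re ⟪A ((R ^ 2 ^ (n + 1)) x), x⟫_𝕜 * re ⟪A x, x⟫_𝕜 := by
      rw [pow_succ, pow_mul, sq, mul_def, comp_apply, (hR.pow _).inner_apply ((R ^ 2 ^ n) x)]
    _ ≤ t (n + 1) * re ⟪A x, x⟫_𝕜 :=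
      mul_le_mul_of_nonneg_right (RCLike.re_le_norm _) (hA.re_inner_nonneg_left x)
  have hK : ∀ n, t n ≤ ‖A‖ * ‖x‖ ^ 2 * ‖R‖ ^ 2 ^ n := fun n => calc
    t n ≤ ‖A ((R ^ 2 ^ n) x)‖ * ‖x‖ := norm_inner_le_norm _ _
    _ ≤ ‖A‖ * (‖R ^ 2 ^ n‖ * ‖x‖) * ‖x‖ := by gcongr; exact A.le_opNorm_of_le (le_opNorm _ x)
    _ ≤ ‖A‖ * (‖R‖ ^ 2 ^ n * ‖x‖) * ‖x‖ := by gcongr; exact norm_pow_le' R (by positivity)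
    _ = ‖A‖ * ‖x‖ ^ 2 * ‖R‖ ^ 2 ^ n := by ring
  simpa [t] using le_mul_of_sq_le_mul_succ (t := t) (hA.re_inner_nonneg_left x) (norm_nonneg R)
    (norm_nonneg _) hsq hK

end IsAdjA

theorem re_inner_add_apply_add_apply {A T Ts S Ss : E →L[𝕜] E} (hA : IsSelfAdjoint A)
    (hT : IsAdjA A T Ts) (hS : IsAdjA A S Ss) (x : E) :
    re ⟪A ((T + S) x), (T + S) x⟫_𝕜 =
      re ⟪A ((Ts ∘L T + Ss ∘L S) x), x⟫_𝕜 + 2 * re ⟪A ((Ss ∘L T) x), x⟫_𝕜 := by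
  have hsymm : re ⟪A (S x), T x⟫_𝕜 = re ⟪A (T x), S x⟫_𝕜 := by
    rw [show ⟪A (S x), T x⟫_𝕜 = ⟪S x, A (T x)⟫_𝕜 from hA.isSymmetric _ _, inner_re_symm]
  simp only [add_apply, comp_apply, map_add, inner_add_left, inner_add_right, hT.inner_apply,
    hS.inner_apply, hsymm]
  ring

end Operators

section Seminorm

variable {V : Type*} [NormedAddCommGroup V] [InnerProductSpace ℂ V] {A T Ts : V →L[ℂ] V}

theorem opnA_nonneg (A X : V →L[ℂ] V) : 0 ≤ opnA A X :=
  Real.sSup_nonneg (by rintro _ ⟨x, -, rfl⟩; exact Real.sqrt_nonneg _)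

theorem wA_nonneg (A X : V →L[ℂ] V) : 0 ≤ wA A X :=
  Real.sSup_nonneg (by rintro _ ⟨x, -, rfl⟩; exact norm_nonneg _)

theorem opnA_le {X : V →L[ℂ] V} {c : ℝ} (hc : 0 ≤ c) (h : ∀ x, vnA A x = 1 → vnA A (X x) ≤ c) :
    opnA A X ≤ c :=
  Real.sSup_le (by rintro _ ⟨x, hx, rfl⟩; exact h x hx) hc

theorem norm_inner_le_vnA_mul_vnA (hA : A.IsPositive) (x y : V) :
    ‖⟪A x, y⟫_ℂ‖ ≤ vnA A x * vnA A y := by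
  rw [vnA, vnA, ← Real.sqrt_mul (hA.re_inner_nonneg_left x)]
  exact Real.le_sqrt_of_sq_le (hA.norm_inner_sq_le x y)

theorem IsAdjA.vnA_apply_le [CompleteSpace V] (hA : A.IsPositive) (h : IsAdjA A T Ts) (x : V) :
    vnA A (T x) ≤ √‖Ts ∘L T‖ * vnA A x := by
  rw [vnA, vnA, ← Real.sqrt_mul (norm_nonneg _), ← h.inner_apply]
  exact Real.sqrt_le_sqrt <| (RCLike.re_le_norm _).trans <|
    (h.comp_self hA.isSelfAdjoint).norm_inner_le hA x

theorem IsAdjA.vnA_apply_le_opnA [CompleteSpace V] (hA : A.IsPositive) (h : IsAdjA A T Ts) {x : V}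
    (hx : vnA A x = 1) : vnA A (T x) ≤ opnA A T :=
  le_csSup ⟨√‖Ts ∘L T‖, by
    rintro _ ⟨y, hy, rfl⟩
    exact (h.vnA_apply_le hA y).trans_eq (by rw [hy, mul_one])⟩
    ⟨x, hx, rfl⟩

theorem IsAdjA.re_inner_le_opnA [CompleteSpace V] (hA : A.IsPositive) (h : IsAdjA A T Ts) {x : V}
    (hx : vnA A x = 1) : re ⟪A (T x), x⟫_ℂ ≤ opnA A T := calc
  re ⟪A (T x), x⟫_ℂ ≤ vnA A (T x) * vnA A x :=
    (RCLike.re_le_norm _).trans (norm_inner_le_vnA_mul_vnA hA _ _)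
  _ = vnA A (T x) := by rw [hx, mul_one]
  _ ≤ opnA A T := h.vnA_apply_le_opnA hA hx

theorem IsAdjA.norm_inner_le_wA [CompleteSpace V] (hA : A.IsPositive) (h : IsAdjA A T Ts) {x : V}
    (hx : vnA A x = 1) : ‖⟪A (T x), x⟫_ℂ‖ ≤ wA A T := by
  refine le_csSup ⟨√‖Ts ∘L T‖, ?_⟩ ⟨x, hx, rfl⟩
  rintro _ ⟨y, hy, rfl⟩
  calc ‖⟪A (T y), y⟫_ℂ‖ ≤ vnA A (T y) * vnA A y := norm_inner_le_vnA_mul_vnA hA _ _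
    _ = vnA A (T y) := by rw [hy, mul_one]
    _ ≤ √‖Ts ∘L T‖ * vnA A y := h.vnA_apply_le hA y
    _ = √‖Ts ∘L T‖ := by rw [hy, mul_one]

end Seminorm

theorem stmt14_general (A T S Ts Ss : H →L[ℂ] H) (hA : A.IsPositive)
    (hTs : IsReducedAdjA A T Ts) (hSs : IsReducedAdjA A S Ss) :
    (opnA A (T + S))^2 ≤ opnA A (Ts ∘L T + Ss ∘L S) + 2 * wA A (Ss ∘L T) := by
  have hT : IsAdjA A T Ts := hTs.1
  have hS : IsAdjA A S Ss := hSs.1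
  have hR := (hT.comp_self hA.isSelfAdjoint).add (hS.comp_self hA.isSelfAdjoint)
  have hW : IsAdjA A (Ss ∘L T) (Ts ∘L S) := hT.comp (hS.symm hA.isSelfAdjoint)
  have hc : 0 ≤ opnA A (Ts ∘L T + Ss ∘L S) + 2 * wA A (Ss ∘L T) :=
    add_nonneg (opnA_nonneg _ _) (mul_nonneg zero_le_two (wA_nonneg _ _))
  rw [← Real.sq_sqrt hc]
  refine pow_le_pow_left₀ (opnA_nonneg _ _) (opnA_le (Real.sqrt_nonneg _) fun x hx => ?_) 2
  refine Real.sqrt_le_sqrt ?_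
  rw [re_inner_add_apply_add_apply hA.isSelfAdjoint hT hS]
  have hR_le := hR.re_inner_le_opnA hA hx
  have hW_le := (RCLike.re_le_norm _).trans (hW.norm_inner_le_wA hA hx)
  linarith

theorem stmt14 (A T S Ts Ss : H →L[ℂ] H) (hA : A.IsPositive) (hA0 : A ≠ 0)
    (hTs : IsReducedAdjA A T Ts) (hSs : IsReducedAdjA A S Ss) :
    (opnA A (T + S))^2 ≤ opnA A (Ts ∘L T + Ss ∘L S) + 2 * wA A (Ss ∘L T) :=
  stmt14_general A T S Ts Ss hA hTs hSs
end

section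
/- Let T and S be bounded linear operators on H that are A-selfadjoint. Then ‖TS‖_A = ‖ST‖_A. -/
open ContinuousLinearMap

variable {H : Type*} [NormedAddCommGroup H] [InnerProductSpace ℂ H] [CompleteSpace H]

/-! With `B = √A` one has `‖x‖_A = ‖B x‖`, so `‖u‖_A` is the supremum of `|⟨A u, y⟩|` over the
`A`-unit sphere. Since `T` and `S` are `A`-selfadjoint, `⟨A (T S x), y⟩ = ⟨A x, S T y⟩`, and
Cauchy–Schwarz for `⟨A ·, ·⟩` turns every bound for `S T` on the `A`-unit sphere into the same bound
for `T S`, and vice versa. Two sets of nonnegative reals with the same nonnegative upper bounds have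
the same `sSup`. -/

namespace Real

lemma sSup_eq_sSup_of_nonneg_mem_upperBounds_iff {s t : Set ℝ} (hs : ∀ x ∈ s, 0 ≤ x)
    (ht : ∀ x ∈ t, 0 ≤ x) (h : ∀ c, 0 ≤ c → (c ∈ upperBounds s ↔ c ∈ upperBounds t)) :
    sSup s = sSup t := by
  have bddAbove_iff : ∀ u : Set ℝ, BddAbove u ↔ ∃ c, 0 ≤ c ∧ c ∈ upperBounds u := fun u =>
    ⟨fun ⟨c, hc⟩ => ⟨max c 0, le_max_right c 0, fun x hx => (hc hx).trans (le_max_left c 0)⟩,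
      fun ⟨c, _, hc⟩ => ⟨c, hc⟩⟩
  have hbdd : BddAbove s ↔ BddAbove t := by
    simp only [bddAbove_iff]
    exact exists_congr fun c => and_congr_right (h c)
  by_cases hbt : BddAbove t
  · refine le_antisymm (Real.sSup_le (fun x hx => ?_) (sSup_nonneg ht))
      (Real.sSup_le (fun x hx => ?_) (sSup_nonneg hs))
    · exact (h _ (sSup_nonneg ht)).2 (fun y hy => le_csSup hbt hy) hx
    · exact (h _ (sSup_nonneg hs)).1 (fun y hy => le_csSup (hbdd.2 hbt) hy) hx
  · rw [sSup_of_not_bddAbove hbt, sSup_of_not_bddAbove (mt hbdd.1 hbt)]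

end Real

section

variable {A : H →L[ℂ] H}

lemma inner_apply_eq_inner_sqrt_apply (hA : A.IsPositive) (x y : H) :
    inner ℂ (A x) y = inner ℂ (CFC.sqrt A x) (CFC.sqrt A y) := by
  have hsa : IsSelfAdjoint (CFC.sqrt A) := IsSelfAdjoint.of_nonneg (CFC.sqrt_nonneg A)
  conv_lhs => rw [← CFC.sqrt_mul_sqrt_self A ((nonneg_iff_isPositive A).2 hA)]
  rw [mul_apply_eq_comp, ← adjoint_inner_right, hsa.adjoint_eq]

lemma vnA_eq_norm_sqrt_apply (hA : A.IsPositive) (x : H) : vnA A x = ‖CFC.sqrt A x‖ := by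
  rw [vnA, inner_apply_eq_inner_sqrt_apply hA, inner_self_eq_norm_sq, Real.sqrt_sq (norm_nonneg _)]

lemma inner_apply_self_eq_vnA_sq (hA : A.IsPositive) (x : H) :
    inner ℂ (A x) x = (vnA A x : ℂ) ^ 2 := by
  rw [inner_apply_eq_inner_sqrt_apply hA, inner_self_eq_norm_sq_to_K, vnA_eq_norm_sqrt_apply hA]
  rfl

lemma vnA_smul (hA : A.IsPositive) (c : ℂ) (x : H) : vnA A (c • x) = ‖c‖ * vnA A x := by
  rw [vnA_eq_norm_sqrt_apply hA, vnA_eq_norm_sqrt_apply hA, map_smul, norm_smul]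

lemma norm_inner_apply_le_vnA_mul_vnA (hA : A.IsPositive) (x y : H) :
    ‖inner ℂ (A x) y‖ ≤ vnA A x * vnA A y := by
  rw [inner_apply_eq_inner_sqrt_apply hA, vnA_eq_norm_sqrt_apply hA, vnA_eq_norm_sqrt_apply hA]
  exact norm_inner_le_norm _ _

lemma vnA_le_of_forall_norm_inner_apply_le (hA : A.IsPositive) {u : H} {c : ℝ} (hc : 0 ≤ c)
    (h : ∀ y, vnA A y = 1 → ‖inner ℂ (A u) y‖ ≤ c) : vnA A u ≤ c := by
  have hn0 : 0 ≤ vnA A u := Real.sqrt_nonneg _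
  rcases hn0.eq_or_lt with hn | hn
  · rw [← hn]; exact hc
  have hunit : vnA A ((vnA A u : ℂ)⁻¹ • u) = 1 := by
    rw [vnA_smul hA, norm_inv, Complex.norm_real, Real.norm_of_nonneg hn.le,
      inv_mul_cancel₀ hn.ne']
  have hinner : inner ℂ (A u) ((vnA A u : ℂ)⁻¹ • u) = (vnA A u : ℂ) := by
    rw [inner_smul_right, inner_apply_self_eq_vnA_sq hA]
    field_simp [Complex.ofReal_ne_zero.2 hn.ne']
  simpa [hinner, Real.norm_of_nonneg hn.le] using h _ hunit

lemma IsSelfAdjA.inner_apply_left {X : H →L[ℂ] H} (hX : IsSelfAdjA A X) (x y : H) :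
    inner ℂ (A (X x)) y = inner ℂ (A x) (X y) := by
  rw [← comp_apply, hX, comp_apply, adjoint_inner_left]

lemma IsSelfAdjA.vnA_comp_le_of_forall_vnA_comp_le (hA : A.IsPositive) {T S : H →L[ℂ] H}
    (hT : IsSelfAdjA A T) (hS : IsSelfAdjA A S) {c : ℝ} (hc : 0 ≤ c)
    (h : ∀ y, vnA A y = 1 → vnA A ((S ∘L T) y) ≤ c) (x : H) (hx : vnA A x = 1) :
    vnA A ((T ∘L S) x) ≤ c := by
  refine vnA_le_of_forall_norm_inner_apply_le hA hc fun y hy => ?_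
  calc ‖inner ℂ (A ((T ∘L S) x)) y‖ = ‖inner ℂ (A x) ((S ∘L T) y)‖ := by
        rw [comp_apply, hT.inner_apply_left, hS.inner_apply_left, comp_apply]
    _ ≤ vnA A x * vnA A ((S ∘L T) y) := norm_inner_apply_le_vnA_mul_vnA hA _ _
    _ ≤ c := by rw [hx, one_mul]; exact h y hy

end

theorem stmt17_general (A T S : H →L[ℂ] H) (hA : A.IsPositive)
    (hT : IsSelfAdjA A T) (hS : IsSelfAdjA A S) :
    opnA A (T ∘L S) = opnA A (S ∘L T) := by
  refine Real.sSup_eq_sSup_of_nonneg_mem_upperBounds_iff ?_ ?_ fun c hc => ?_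
  · rintro _ ⟨x, -, rfl⟩; exact Real.sqrt_nonneg _
  · rintro _ ⟨x, -, rfl⟩; exact Real.sqrt_nonneg _
  simp only [mem_upperBounds, Set.forall_mem_image, Set.mem_ofPred_eq]
  exact ⟨hS.vnA_comp_le_of_forall_vnA_comp_le hA hT hc,
    hT.vnA_comp_le_of_forall_vnA_comp_le hA hS hc⟩

theorem stmt17 (A T S : H →L[ℂ] H) (hA : A.IsPositive) (hA0 : A ≠ 0)
    (hT : IsSelfAdjA A T) (hS : IsSelfAdjA A S) :
    opnA A (T ∘L S) = opnA A (S ∘L T) :=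
  stmt17_general A T S hA hT hS
end
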